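/- arXiv:1804.08498 — 5 statements merged into one kernel-verified Lean document; each statement's English description precedes it below -/
import Mathlib

section
/- Let α : 𝒳 → 𝒳, β : 𝒰 → 𝒳, γ : 𝒳 → 𝒴, δ : 𝒰 → 𝒴 be bounded operators between complex Hilbert spaces such that the system matrix M = [[δ, γ],[β, α]] : 𝒰 ⊕ 𝒳 → 𝒴 ⊕ 𝒳 is a contraction. Then for every complex λ with |λ| < 1 the operator I − λα is invertible, and the transfer function F(λ) = δ + λ γ (I − λα)⁻¹ β satisfies, for every u ∈ 𝒰, the inequality ‖F(λ)u‖² + (1 − |λ|²)‖(I − λα)⁻¹ β u‖² ≤ ‖u‖²; in particular ‖F(λ)‖ ≤ 1 for every λ in the open unit disc, so that F is a Schur class function. -/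
/-! Feeding the state `x = (I − λα)⁻¹βu` into the contraction `M` and using `βu + α(λx) = x`
turns `‖M(u, λx)‖² ≤ ‖u‖² + ‖λx‖²` into `‖F(λ)u‖² + ‖x‖² ≤ ‖u‖² + |λ|²‖x‖²`. Invertibility of
`I − λα` comes from `‖α‖ ≤ 1`, since `α` is a corner of `M`. -/

open ContinuousLinearMap

noncomputable section

variable {𝒳 𝒰 𝒴 : Type*}
  [NormedAddCommGroup 𝒳] [InnerProductSpace ℂ 𝒳] [CompleteSpace 𝒳]
  [NormedAddCommGroup 𝒰] [InnerProductSpace ℂ 𝒰] [CompleteSpace 𝒰]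
  [NormedAddCommGroup 𝒴] [InnerProductSpace ℂ 𝒴] [CompleteSpace 𝒴]

/-- row operator `[g₁ g₂] : A ⊕ B → C`. -/
noncomputable def rowC {A B C : Type*}
    [NormedAddCommGroup A] [InnerProductSpace ℂ A]
    [NormedAddCommGroup B] [InnerProductSpace ℂ B]
    [NormedAddCommGroup C] [InnerProductSpace ℂ C]
    (g₁ : A →L[ℂ] C) (g₂ : B →L[ℂ] C) : WithLp 2 (A × B) →L[ℂ] C :=
  (g₁.coprod g₂).comp (WithLp.prodContinuousLinearEquiv 2 ℂ A B).toContinuousLinearMap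

/-- 2×2 block operator `[[d, g],[b, a]] : A ⊕ B → C ⊕ D`. -/
noncomputable def block2 {A B C D : Type*}
    [NormedAddCommGroup A] [InnerProductSpace ℂ A]
    [NormedAddCommGroup B] [InnerProductSpace ℂ B]
    [NormedAddCommGroup C] [InnerProductSpace ℂ C]
    [NormedAddCommGroup D] [InnerProductSpace ℂ D]
    (d : A →L[ℂ] C) (g : B →L[ℂ] C) (b : A →L[ℂ] D) (a : B →L[ℂ] D) :
    WithLp 2 (A × B) →L[ℂ] WithLp 2 (C × D) :=
  ((WithLp.prodContinuousLinearEquiv 2 ℂ C D).symm).toContinuousLinearMap.comp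
    ((rowC d g).prod (rowC b a))

section BlockOperator

variable {A B C D : Type*}
  [NormedAddCommGroup A] [InnerProductSpace ℂ A] [NormedAddCommGroup B] [InnerProductSpace ℂ B]
  [NormedAddCommGroup C] [InnerProductSpace ℂ C] [NormedAddCommGroup D] [InnerProductSpace ℂ D]
  {d : A →L[ℂ] C} {g : B →L[ℂ] C} {b : A →L[ℂ] D} {a : B →L[ℂ] D}

theorem block2_apply_toLp (u : A) (x : B) :
    block2 d g b a (WithLp.toLp 2 (u, x)) = WithLp.toLp 2 (d u + g x, b u + a x) :=
  rfl

theorem norm_sq_add_norm_sq_le_of_norm_block2_le_one (hM : ‖block2 d g b a‖ ≤ 1)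
    (u : A) (x : B) : ‖d u + g x‖ ^ 2 + ‖b u + a x‖ ^ 2 ≤ ‖u‖ ^ 2 + ‖x‖ ^ 2 := by
  have hle : ‖block2 d g b a (WithLp.toLp 2 (u, x))‖ ≤ ‖WithLp.toLp 2 (u, x)‖ := by
    simpa only [one_mul] using (block2 d g b a).le_of_opNorm_le hM _
  have hsq := pow_le_pow_left₀ (norm_nonneg _) hle 2
  rwa [block2_apply_toLp, WithLp.prod_norm_sq_eq_of_L2, WithLp.prod_norm_sq_eq_of_L2] at hsq

theorem norm_le_one_of_norm_block2_le_one (hM : ‖block2 d g b a‖ ≤ 1) : ‖a‖ ≤ 1 := by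
  refine opNorm_le_bound _ zero_le_one fun x => ?_
  have hx := norm_sq_add_norm_sq_le_of_norm_block2_le_one hM 0 x
  simp only [map_zero, zero_add, norm_zero] at hx
  rw [one_mul]
  exact pow_le_pow_iff_left₀ (norm_nonneg _) (norm_nonneg _) two_ne_zero |>.mp
    (by linarith [sq_nonneg ‖g x‖])

end BlockOperator

theorem isUnit_one_sub_smul_of_norm_le_one {𝕜 R : Type*} [NormedField 𝕜] [NormedRing R]
    [NormedSpace 𝕜 R] [HasSummableGeomSeries R] {a : R} (ha : ‖a‖ ≤ 1) {z : 𝕜}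
    (hz : ‖z‖ < 1) : IsUnit (1 - z • a) :=
  isUnit_one_sub_of_norm_lt_one <| calc
    ‖z • a‖ ≤ ‖z‖ * ‖a‖ := norm_smul_le z a
    _ ≤ ‖z‖ * 1 := by gcongr
    _ < 1 := by rwa [mul_one]

theorem add_smul_apply_inverse_one_sub_smul {𝕜 E : Type*} [NormedField 𝕜]
    [NormedAddCommGroup E] [NormedSpace 𝕜 E] {a : E →L[𝕜] E} {z : 𝕜}
    (h : IsUnit (1 - z • a)) (y : E) :
    y + z • a (Ring.inverse (1 - z • a) y) = Ring.inverse (1 - z • a) y := by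
  have hy : Ring.inverse (1 - z • a) y - z • a (Ring.inverse (1 - z • a) y) = y :=
    congrArg (fun T => T y) (Ring.mul_inverse_cancel _ h)
  exact eq_sub_iff_add_eq.mp hy.symm

section TransferFunction

variable {U X Y : Type*}
  [NormedAddCommGroup U] [InnerProductSpace ℂ U] [NormedAddCommGroup X] [InnerProductSpace ℂ X]
  [CompleteSpace X] [NormedAddCommGroup Y] [InnerProductSpace ℂ Y]

def transferFunction (α : X →L[ℂ] X) (β : U →L[ℂ] X) (γ : X →L[ℂ] Y) (δ : U →L[ℂ] Y) (z : ℂ) :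
    U →L[ℂ] Y :=
  δ + z • (γ.comp ((Ring.inverse (1 - z • α)).comp β))

variable {α : X →L[ℂ] X} {β : U →L[ℂ] X} {γ : X →L[ℂ] Y} {δ : U →L[ℂ] Y}

theorem norm_sq_transferFunction_apply_add_le (hM : ‖block2 δ γ β α‖ ≤ 1) {z : ℂ}
    (hz : ‖z‖ < 1) (u : U) :
    ‖transferFunction α β γ δ z u‖ ^ 2 + (1 - ‖z‖ ^ 2) * ‖Ring.inverse (1 - z • α) (β u)‖ ^ 2
      ≤ ‖u‖ ^ 2 := by
  set x := Ring.inverse (1 - z • α) (β u)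
  have hunit := isUnit_one_sub_smul_of_norm_le_one (norm_le_one_of_norm_block2_le_one hM) hz
  have hstate : β u + α (z • x) = x := by
    rw [map_smul]; exact add_smul_apply_inverse_one_sub_smul hunit (β u)
  have hF : transferFunction α β γ δ z u = δ u + γ (z • x) := by
    simp [transferFunction, x]
  have henergy := norm_sq_add_norm_sq_le_of_norm_block2_le_one hM u (z • x)
  rw [hstate, norm_smul, mul_pow, ← hF] at henergy
  linarith

theorem norm_transferFunction_le_one (hM : ‖block2 δ γ β α‖ ≤ 1) {z : ℂ} (hz : ‖z‖ < 1) :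
    ‖transferFunction α β γ δ z‖ ≤ 1 := by
  refine opNorm_le_bound _ zero_le_one fun u => ?_
  have hdefect : 0 ≤ (1 - ‖z‖ ^ 2) * ‖Ring.inverse (1 - z • α) (β u)‖ ^ 2 :=
    mul_nonneg (sub_nonneg.mpr (pow_le_one₀ (norm_nonneg z) hz.le)) (sq_nonneg _)
  rw [one_mul]
  exact pow_le_pow_iff_left₀ (norm_nonneg _) (norm_nonneg _) two_ne_zero |>.mp
    (by linarith [norm_sq_transferFunction_apply_add_le hM hz u])

end TransferFunction

theorem transfer_function_of_contractive_system_is_schur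
    (α : 𝒳 →L[ℂ] 𝒳) (β : 𝒰 →L[ℂ] 𝒳) (γ : 𝒳 →L[ℂ] 𝒴) (δ : 𝒰 →L[ℂ] 𝒴)
    (hM : ‖block2 δ γ β α‖ ≤ 1) (z : ℂ) (hz : ‖z‖ < 1) :
    IsUnit (1 - z • α) ∧
    (∀ u : 𝒰,
      ‖(δ + z • (γ.comp ((Ring.inverse (1 - z • α)).comp β))) u‖ ^ 2
        + (1 - ‖z‖ ^ 2) * ‖(Ring.inverse (1 - z • α)) (β u)‖ ^ 2 ≤ ‖u‖ ^ 2) ∧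
    ‖δ + z • (γ.comp ((Ring.inverse (1 - z • α)).comp β))‖ ≤ 1 :=
  ⟨isUnit_one_sub_smul_of_norm_le_one (norm_le_one_of_norm_block2_le_one hM) hz,
    norm_sq_transferFunction_apply_add_le hM hz,
    norm_transferFunction_le_one hM hz⟩

end
end

section
/- Let F ∈ 𝒮(𝒰, 𝒴) be a Schur class function, and suppose F has a co-isometric realization {α, β, γ, δ} with state space 𝒳: the system matrix M = [[δ, γ],[β, α]] : 𝒰 ⊕ 𝒳 → 𝒴 ⊕ 𝒳 satisfies M M* = I and F(λ) = δ + λ γ (I − λα)⁻¹ β for all |λ| < 1. Then F has an observable co-isometric realization with the same δ: there exist a Hilbert space 𝒳₀ and operators α₀ : 𝒳₀ → 𝒳₀, β₀ : 𝒰 → 𝒳₀, γ₀ : 𝒳₀ → 𝒴 such that [[δ, γ₀],[β₀, α₀]] is a co-isometry, ⋂ₙ ker(γ₀ α₀ⁿ) = {0}, and F(λ) = δ + λ γ₀ (I − λα₀)⁻¹ β₀ for all |λ| < 1. -/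
/- Statement 4: If a Schur class function F ∈ 𝒮(𝒰, 𝒴) has a co-isometric realization
{α, β, γ, δ} (system matrix M = [[δ, γ],[β, α]] with M M* = I, expressed blockwise),
then F has an observable co-isometric realization with the same δ. -/

open ContinuousLinearMap

noncomputable section

universe u v w

variable (𝒰 : Type u) (𝒴 : Type v)
  [NormedAddCommGroup 𝒰] [InnerProductSpace ℂ 𝒰] [CompleteSpace 𝒰]
  [NormedAddCommGroup 𝒴] [InnerProductSpace ℂ 𝒴] [CompleteSpace 𝒴]

/-- An observable co-isometric realization of an operator-valued function
`F : ℂ → (𝒰 →L[ℂ] 𝒴)`, with state space in universe `w`. -/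
structure ObsCoisometricRealization (F : ℂ → (𝒰 →L[ℂ] 𝒴)) : Type (max u v (w + 1)) where
  /-- the state space -/
  𝒳 : Type w
  [instN : NormedAddCommGroup 𝒳]
  [instI : InnerProductSpace ℂ 𝒳]
  [instC : CompleteSpace 𝒳]
  α : 𝒳 →L[ℂ] 𝒳
  β : 𝒰 →L[ℂ] 𝒳
  γ : 𝒳 →L[ℂ] 𝒴
  δ : 𝒰 →L[ℂ] 𝒴
  /-- the system matrix `[[δ, γ],[β, α]]` is a co-isometry: `M M* = I` blockwise -/
  coiso₁₁ : δ.comp (adjoint δ) + γ.comp (adjoint γ) = 1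
  coiso₁₂ : δ.comp (adjoint β) + γ.comp (adjoint α) = 0
  coiso₂₁ : β.comp (adjoint δ) + α.comp (adjoint γ) = 0
  coiso₂₂ : β.comp (adjoint β) + α.comp (adjoint α) = 1
  /-- observability: ⋂ₙ ker (γ αⁿ) = {0} -/
  observable : ∀ x : 𝒳, (∀ n : ℕ, γ ((α ^ n) x) = 0) → x = 0
  /-- realization of `F` on the open unit disc -/
  realizes : ∀ z : ℂ, ‖z‖ < 1 →
    IsUnit (1 - z • α) ∧
      F z = δ + z • (γ.comp ((Ring.inverse (1 - z • α)).comp β))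

/- The unobservable subspace `N = ⋂ₙ ker (γ αⁿ)` is closed, `α`-invariant and lies in `ker γ`.
Compress the system to `K = Nᗮ`, with `P` the orthogonal projection onto `K` and `J` the inclusion:
`α₀ = P α J`, `β₀ = P β`, `γ₀ = γ J`. Since `N` is annihilated by `γ` and by `P α`, we get
`γ J P = γ` and `α₀ P = P α`. These turn each block of `M₀ M₀*` into the corresponding block of
`M M*` with `P` on the left and/or `J` on the right, and give `(1 - λ α₀)⁻¹ P = P (1 - λ α)⁻¹`,
so the compression is again a co-isometric realization of `F`. It is observable because
`γ₀ α₀ⁿ = γ αⁿ J`, so a vector of `K` unobservable for `(γ₀, α₀)` lies in `N ∩ Nᗮ = 0`. -/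

open Submodule

section NormedSpace

variable {𝕜 E F : Type*} [NontriviallyNormedField 𝕜]
  [NormedAddCommGroup E] [NormedSpace 𝕜 E] [NormedAddCommGroup F] [NormedSpace 𝕜 F]

theorem isUnit_one_sub_smul_of_norm_le_one_s4 [CompleteSpace E] {α : E →L[𝕜] E} (hα : ‖α‖ ≤ 1)
    {z : 𝕜} (hz : ‖z‖ < 1) : IsUnit (1 - z • α) :=
  (Units.oneSub (z • α) ((opNorm_smul_le z α).trans_lt (by nlinarith [norm_nonneg z]))).isUnit

theorem inverse_comp_of_comp_eq {A : E →L[𝕜] E} {B : F →L[𝕜] F} {P : E →L[𝕜] F}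
    (hA : IsUnit A) (hB : IsUnit B) (h : B ∘L P = P ∘L A) :
    Ring.inverse B ∘L P = P ∘L Ring.inverse A := by
  calc Ring.inverse B ∘L P = Ring.inverse B ∘L P ∘L (A * Ring.inverse A) := by
        rw [Ring.mul_inverse_cancel _ hA, one_def, comp_id]
    _ = (Ring.inverse B * B) ∘L P ∘L Ring.inverse A := by
        rw [ContinuousLinearMap.mul_def, ContinuousLinearMap.mul_def, ← comp_assoc P, ← h,
          comp_assoc, comp_assoc]
    _ = P ∘L Ring.inverse A := by rw [Ring.inverse_mul_cancel _ hB, one_def, id_comp]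

end NormedSpace

section Unobservable

variable {𝕜 X Y : Type*} [RCLike 𝕜] [NormedAddCommGroup X] [NormedSpace 𝕜 X]
  [NormedAddCommGroup Y] [NormedSpace 𝕜 Y] {γ : X →L[𝕜] Y} {α : X →L[𝕜] X}

variable (γ α) in
def unobservableSubspace : Submodule 𝕜 X :=
  ⨅ n : ℕ, (γ ∘L α ^ n).ker

theorem mem_unobservableSubspace {x : X} :
    x ∈ unobservableSubspace γ α ↔ ∀ n : ℕ, γ ((α ^ n) x) = 0 := by
  simp only [unobservableSubspace, Submodule.mem_iInf]
  rfl

theorem isClosed_unobservableSubspace : IsClosed (unobservableSubspace γ α : Set X) := by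
  rw [unobservableSubspace, Submodule.coe_iInf]
  exact isClosed_iInter fun n => (γ ∘L α ^ n).isClosed_ker

instance [CompleteSpace X] : CompleteSpace (unobservableSubspace γ α) :=
  isClosed_unobservableSubspace.completeSpace_coe

theorem unobservableSubspace_le_ker : unobservableSubspace γ α ≤ γ.ker := fun x hx => by
  simpa using mem_unobservableSubspace.1 hx 0

theorem apply_mem_unobservableSubspace {x : X} (hx : x ∈ unobservableSubspace γ α) :
    α x ∈ unobservableSubspace γ α :=
  mem_unobservableSubspace.2 fun n => by
    simpa [pow_succ] using mem_unobservableSubspace.1 hx (n + 1)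

end Unobservable

section Compression

variable {𝕜 U X Y : Type*} [RCLike 𝕜] [NormedAddCommGroup X] [InnerProductSpace 𝕜 X]
  [NormedAddCommGroup U] [NormedSpace 𝕜 U] [NormedAddCommGroup Y] [NormedSpace 𝕜 Y]
  (K : Submodule 𝕜 X) [K.HasOrthogonalProjection]

def Submodule.compression (α : X →L[𝕜] X) : K →L[𝕜] K :=
  K.orthogonalProjectionOnto ∘L α ∘L K.subtypeL

theorem comp_starProjection_of_orthogonal_le_ker {T : X →L[𝕜] Y} (h : Kᗮ ≤ T.ker) :
    T ∘L K.starProjection = T := by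
  ext x
  have hx : T (x - K.starProjection x) = 0 := h (K.sub_starProjection_mem_orthogonal x)
  rw [map_sub, sub_eq_zero] at hx
  exact hx.symm

theorem orthogonalProjectionOnto_comp_subtypeL :
    K.orthogonalProjectionOnto ∘L K.subtypeL = 1 := by
  ext x
  simp

variable {K} {α : X →L[𝕜] X} {β : U →L[𝕜] X} {γ : X →L[𝕜] Y}

theorem compression_comp_orthogonalProjectionOnto (hα : ∀ x ∈ Kᗮ, α x ∈ Kᗮ) :
    K.compression α ∘L K.orthogonalProjectionOnto = K.orthogonalProjectionOnto ∘L α :=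
  comp_starProjection_of_orthogonal_le_ker (T := K.orthogonalProjectionOnto ∘L α) K fun x hx =>
    orthogonalProjectionOnto_apply_of_mem_orthogonal (hα x hx)

theorem comp_resolvent_compression_comp (hγ : Kᗮ ≤ γ.ker) (hα : ∀ x ∈ Kᗮ, α x ∈ Kᗮ) {z : 𝕜}
    (hA : IsUnit (1 - z • α)) (hA₀ : IsUnit (1 - z • K.compression α)) :
    (γ ∘L K.subtypeL) ∘L Ring.inverse (1 - z • K.compression α) ∘L K.orthogonalProjectionOnto ∘L β
      = γ ∘L Ring.inverse (1 - z • α) ∘L β := by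
  have hγQ : (γ ∘L K.subtypeL) ∘L K.orthogonalProjectionOnto = γ :=
    comp_starProjection_of_orthogonal_le_ker K hγ
  have hcomm : (1 - z • K.compression α) ∘L K.orthogonalProjectionOnto =
      K.orthogonalProjectionOnto ∘L (1 - z • α) := by
    rw [sub_comp, smul_comp, compression_comp_orthogonalProjectionOnto hα, comp_sub, comp_smul,
      one_def, one_def, id_comp, comp_id]
  rw [← comp_assoc _ K.orthogonalProjectionOnto β, inverse_comp_of_comp_eq hA hA₀ hcomm]
  simp only [← comp_assoc, hγQ]

theorem comp_subtypeL_comp_compression_pow (hK : Kᗮ ≤ unobservableSubspace γ α) (n : ℕ) :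
    (γ ∘L K.subtypeL) ∘L K.compression α ^ n = (γ ∘L α ^ n) ∘L K.subtypeL := by
  induction n with
  | zero => rfl
  | succ n ih =>
    have hQ : ((γ ∘L α ^ n) ∘L K.subtypeL) ∘L K.orthogonalProjectionOnto = γ ∘L α ^ n :=
      comp_starProjection_of_orthogonal_le_ker (T := γ ∘L α ^ n) K fun x hx =>
        mem_unobservableSubspace.1 (hK hx) n
    rw [pow_succ, ContinuousLinearMap.mul_def, ← comp_assoc, ih, compression, ← comp_assoc,
      ← comp_assoc, hQ, pow_succ, ContinuousLinearMap.mul_def]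
    simp only [comp_assoc]

theorem observable_compression (hK : Kᗮ = unobservableSubspace γ α) (x : K)
    (hx : ∀ n : ℕ, (γ ∘L K.subtypeL) ((K.compression α ^ n) x) = 0) : x = 0 := by
  have hxK : (x : X) ∈ Kᗮ := hK ▸ mem_unobservableSubspace.2 fun n =>
    (DFunLike.congr_fun (comp_subtypeL_comp_compression_pow hK.le n) x).symm.trans (hx n)
  simpa using K.orthogonal_disjoint.le_bot ⟨x.2, hxK⟩

end Compression

section Coisometry

variable {𝕜 U X Y : Type*} [RCLike 𝕜]
  [NormedAddCommGroup U] [InnerProductSpace 𝕜 U] [CompleteSpace U]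
  [NormedAddCommGroup X] [InnerProductSpace 𝕜 X] [CompleteSpace X]
  [NormedAddCommGroup Y] [InnerProductSpace 𝕜 Y] [CompleteSpace Y]

theorem norm_le_one_of_comp_adjoint_add_comp_adjoint_eq_one (β : U →L[𝕜] X) (α : Y →L[𝕜] X)
    (h : β ∘L adjoint β + α ∘L adjoint α = 1) : ‖α‖ ≤ 1 := by
  rw [← adjoint.norm_map α]
  refine opNorm_le_bound _ zero_le_one fun x => ?_
  have hx : ‖adjoint β x‖ ^ 2 + ‖adjoint α x‖ ^ 2 = ‖x‖ ^ 2 := by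
    rw [apply_norm_sq_eq_inner_adjoint_right, apply_norm_sq_eq_inner_adjoint_right,
      adjoint_adjoint, adjoint_adjoint, ← map_add, ← inner_add_right, ← add_apply, h,
      one_apply_eq_self, inner_self_eq_norm_sq]
  rw [one_mul, ← pow_le_pow_iff_left₀ (norm_nonneg _) (norm_nonneg _) two_ne_zero]
  linarith [sq_nonneg ‖adjoint β x‖]

/-- `M M* = 1` for the system matrix `M = [[δ, γ], [β, α]] : U ⊕ X → Y ⊕ X`, written blockwise. -/
structure IsCoisometricSystem (α : X →L[𝕜] X) (β : U →L[𝕜] X) (γ : X →L[𝕜] Y)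
    (δ : U →L[𝕜] Y) : Prop where
  coiso₁₁ : δ ∘L adjoint δ + γ ∘L adjoint γ = 1
  coiso₁₂ : δ ∘L adjoint β + γ ∘L adjoint α = 0
  coiso₂₁ : β ∘L adjoint δ + α ∘L adjoint γ = 0
  coiso₂₂ : β ∘L adjoint β + α ∘L adjoint α = 1

variable {α : X →L[𝕜] X} {β : U →L[𝕜] X} {γ : X →L[𝕜] Y} {δ : U →L[𝕜] Y}

theorem IsCoisometricSystem.isUnit_one_sub_smul (hM : IsCoisometricSystem α β γ δ) {z : 𝕜}
    (hz : ‖z‖ < 1) : IsUnit (1 - z • α) :=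
  isUnit_one_sub_smul_of_norm_le_one_s4
    (norm_le_one_of_comp_adjoint_add_comp_adjoint_eq_one β α hM.coiso₂₂) hz

theorem IsCoisometricSystem.compression (hM : IsCoisometricSystem α β γ δ) (K : Submodule 𝕜 X)
    [CompleteSpace K] (hγ : Kᗮ ≤ γ.ker) (hα : ∀ x ∈ Kᗮ, α x ∈ Kᗮ) :
    IsCoisometricSystem (K.compression α) (K.orthogonalProjectionOnto ∘L β) (γ ∘L K.subtypeL)
      δ := by
  unfold Submodule.compression
  set P := K.orthogonalProjectionOnto
  set J := K.subtypeL
  have hJ : adjoint J = P := K.adjoint_subtypeL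
  have hP : adjoint P = J := K.adjoint_orthogonalProjectionOnto
  have hγQ : (γ ∘L J) ∘L P = γ := comp_starProjection_of_orthogonal_le_ker K hγ
  have hαQ : ((P ∘L α) ∘L J) ∘L P = P ∘L α := compression_comp_orthogonalProjectionOnto hα
  constructor <;> simp only [adjoint_comp, hJ, hP, ← comp_assoc]
  · rw [hγQ, hM.coiso₁₁]
  · rw [hγQ, ← add_comp, hM.coiso₁₂, zero_comp]
  · rw [hαQ, comp_assoc, comp_assoc, ← comp_add, hM.coiso₂₁, comp_zero]
  · rw [hαQ, ← add_comp, comp_assoc P β, comp_assoc P α, ← comp_add, hM.coiso₂₂, one_def,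
      comp_id, orthogonalProjectionOnto_comp_subtypeL]

end Coisometry

theorem coisometric_realization_to_observable
    (𝒳 : Type w) [NormedAddCommGroup 𝒳] [InnerProductSpace ℂ 𝒳] [CompleteSpace 𝒳]
    (F : ℂ → (𝒰 →L[ℂ] 𝒴))
    (α : 𝒳 →L[ℂ] 𝒳) (β : 𝒰 →L[ℂ] 𝒳) (γ : 𝒳 →L[ℂ] 𝒴) (δ : 𝒰 →L[ℂ] 𝒴)
    -- the system matrix [[δ, γ],[β, α]] is a co-isometry (M M* = I, blockwise)
    (h₁₁ : δ.comp (adjoint δ) + γ.comp (adjoint γ) = 1)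
    (h₁₂ : δ.comp (adjoint β) + γ.comp (adjoint α) = 0)
    (h₂₁ : β.comp (adjoint δ) + α.comp (adjoint γ) = 0)
    (h₂₂ : β.comp (adjoint β) + α.comp (adjoint α) = 1)
    -- {α, β, γ, δ} is a realization of F on the open unit disc
    (hreal : ∀ z : ℂ, ‖z‖ < 1 →
      IsUnit (1 - z • α) ∧
        F z = δ + z • (γ.comp ((Ring.inverse (1 - z • α)).comp β))) :
    ∃ R : ObsCoisometricRealization.{u, v, w} 𝒰 𝒴 F, R.δ = δ := by
  set N := unobservableSubspace γ α
  have hK : Nᗮᗮ = N := orthogonal_orthogonal N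
  have hγ : Nᗮᗮ ≤ γ.ker := by rw [hK]; exact unobservableSubspace_le_ker
  have hα : ∀ x ∈ Nᗮᗮ, α x ∈ Nᗮᗮ := by rw [hK]; exact fun x => apply_mem_unobservableSubspace
  have hM₀ := IsCoisometricSystem.compression ⟨h₁₁, h₁₂, h₂₁, h₂₂⟩ Nᗮ hγ hα
  refine ⟨⟨Nᗮ, Nᗮ.compression α, _, _, δ, hM₀.coiso₁₁, hM₀.coiso₁₂, hM₀.coiso₂₁, hM₀.coiso₂₂,
    observable_compression hK, fun z hz => ?_⟩, rfl⟩
  obtain ⟨hA, hFz⟩ := hreal z hz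
  have hA₀ := hM₀.isUnit_one_sub_smul hz
  exact ⟨hA₀, by rw [hFz, comp_resolvent_compression_comp hγ hα hA hA₀]⟩

end
end

section
/- Let Z be a bounded operator on a complex Hilbert space 𝒵 such that Z* is pointwise stable, let α be a bounded operator on a complex Hilbert space 𝒳 with sup_{n≥0} ‖αⁿ‖ < ∞, and let Ξ : 𝒳 → 𝒵 be a bounded operator. If Ω₁ and Ω₂ are bounded operators from 𝒳 to 𝒵 both satisfying the Stein equation Ω − Z Ω α = Ξ, then Ω₁ = Ω₂. -/
/- Statement 15 (Uniqueness of solutions of the Stein equation Ω − ZΩα = Ξ): if Z* is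
pointwise stable and sup_n ‖αⁿ‖ < ∞, then the Stein equation has at most one
solution. -/

open ContinuousLinearMap Filter Topology

noncomputable section

variable {𝒵 𝒳 : Type*}
  [NormedAddCommGroup 𝒵] [InnerProductSpace ℂ 𝒵] [CompleteSpace 𝒵]
  [NormedAddCommGroup 𝒳] [InnerProductSpace ℂ 𝒳] [CompleteSpace 𝒳]

local notation "⟪" x ", " y "⟫" => @inner ℂ _ _ x y

theorem stein_equation_unique_solution
    (Z : 𝒵 →L[ℂ] 𝒵) (α : 𝒳 →L[ℂ] 𝒳) (Ξ : 𝒳 →L[ℂ] 𝒵)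
    -- Z* is pointwise stable
    (hZ : ∀ h : 𝒵, Tendsto (fun n : ℕ => ((adjoint Z) ^ n) h) atTop (𝓝 0))
    -- sup_{n ≥ 0} ‖αⁿ‖ < ∞
    (hα : ∃ c : ℝ, ∀ n : ℕ, ‖α ^ n‖ ≤ c)
    (Ω₁ Ω₂ : 𝒳 →L[ℂ] 𝒵)
    (h₁ : Ω₁ - Z.comp (Ω₁.comp α) = Ξ)
    (h₂ : Ω₂ - Z.comp (Ω₂.comp α) = Ξ) :
    Ω₁ = Ω₂ := by
  obtain ⟨c, hc⟩ := hα
  set Δ : 𝒳 →L[ℂ] 𝒵 := Ω₁ - Ω₂ with hΔdef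
  have hfix : ∀ x, Δ x = Z (Δ (α x)) := by
    intro x
    have h1 := congrFun (congrArg DFunLike.coe h₁) x
    have h2 := congrFun (congrArg DFunLike.coe h₂) x
    simp only [sub_apply, comp_apply] at h1 h2 ⊢
    simp only [hΔdef, sub_apply, map_sub]
    have := h1.trans h2.symm
    exact sub_eq_sub_iff_sub_eq_sub.mp this
  have iter : ∀ n : ℕ, ∀ x, Δ x = (Z ^ n) (Δ ((α ^ n) x)) := by
    intro n
    induction n with
    | zero => simp
    | succ n ih =>
      intro x
      rw [ih x, hfix ((α ^ n) x), pow_succ Z, pow_succ' α]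
      simp [mul_apply]
  have hadj : ∀ n : ℕ, adjoint (Z ^ n) = (adjoint Z) ^ n := by
    intro n
    rw [← star_eq_adjoint, ← star_eq_adjoint, star_pow]
  ext x
  rw [← sub_eq_zero, ← sub_apply]
  change Δ x = 0
  rw [← inner_self_eq_zero (𝕜 := ℂ)]
  have key : Tendsto (fun n : ℕ => ⟪Δ x, Δ x⟫) atTop (𝓝 0) := by
    have heq : ∀ n : ℕ, ⟪Δ x, Δ x⟫ = ⟪((adjoint Z) ^ n) (Δ x), Δ ((α ^ n) x)⟫ := by
      intro n
      rw [← hadj, adjoint_inner_left, ← iter n x]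
    have hbound : ∀ n : ℕ, ‖⟪Δ x, Δ x⟫‖ ≤ ‖((adjoint Z) ^ n) (Δ x)‖ * (‖Δ‖ * (c * ‖x‖)) := by
      intro n
      rw [heq n]
      calc ‖⟪((adjoint Z) ^ n) (Δ x), Δ ((α ^ n) x)⟫‖
          ≤ ‖((adjoint Z) ^ n) (Δ x)‖ * ‖Δ ((α ^ n) x)‖ := norm_inner_le_norm _ _
        _ ≤ ‖((adjoint Z) ^ n) (Δ x)‖ * (‖Δ‖ * (c * ‖x‖)) := by
            apply mul_le_mul_of_nonneg_left _ (norm_nonneg _)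
            calc ‖Δ ((α ^ n) x)‖ ≤ ‖Δ‖ * ‖(α ^ n) x‖ := Δ.le_opNorm _
              _ ≤ ‖Δ‖ * (c * ‖x‖) := by
                  apply mul_le_mul_of_nonneg_left _ (norm_nonneg Δ)
                  calc ‖(α ^ n) x‖ ≤ ‖α ^ n‖ * ‖x‖ := (α ^ n).le_opNorm _
                    _ ≤ c * ‖x‖ := mul_le_mul_of_nonneg_right (hc n) (norm_nonneg _)
    have hZtend : Tendsto (fun n : ℕ => ‖((adjoint Z) ^ n) (Δ x)‖ * (‖Δ‖ * (c * ‖x‖)))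
        atTop (𝓝 0) := by
      have := (hZ (Δ x)).norm
      simpa using this.mul_const (‖Δ‖ * (c * ‖x‖))
    exact squeeze_zero_norm hbound hZtend
  exact tendsto_nhds_unique tendsto_const_nhds key
end
end

section
/- Let Z be a bounded operator on a complex Hilbert space 𝒵 such that Z* is pointwise stable, and let B : 𝒴 → 𝒵 be a bounded operator. Suppose P is a bounded operator on 𝒵 satisfying the Stein equation P = Z P Z* + B B*. Then P is the only solution of this Stein equation, and for every z ∈ 𝒵 the series Σ_{n≥0} Zⁿ B B* (Z*)ⁿ z converges in norm to P z; in particular ⟨P z, z⟩ = Σ_{n≥0} ‖B*(Z*)ⁿ z‖² for every z ∈ 𝒵. -/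
/-!
Iterating the Stein equation `P = Z P Z* + Q` gives
`P = Zᴺ P (Z*)ᴺ + ∑_{n<N} Zⁿ Q (Z*)ⁿ`. Since `Z*` is pointwise stable, Banach–Steinhaus bounds
`‖Zⁿ‖ = ‖(Z*)ⁿ‖` uniformly, so `Zᴺ D (Z*)ᴺ z → 0` for every operator `D`. For `D = P` this is the
norm convergence of the series; the difference of two solutions is a fixed point of
`D ↦ Z D Z*`, hence zero. Pairing the series with `z` gives `⟨P z, z⟩ = ∑ ‖B* (Z*)ⁿ z‖²`.
-/

open ContinuousLinearMap Filter Topology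

theorem exists_norm_le_of_tendsto_apply {𝕜 E F : Type*} [NontriviallyNormedField 𝕜]
    [NormedAddCommGroup E] [NormedSpace 𝕜 E] [CompleteSpace E]
    [NormedAddCommGroup F] [NormedSpace 𝕜 F] {g : ℕ → E →L[𝕜] F} {f : E → F}
    (hg : ∀ x, Tendsto (fun n => g n x) atTop (𝓝 (f x))) : ∃ C, ∀ n, ‖g n‖ ≤ C :=
  banach_steinhaus fun x =>
    (isBounded_iff_forall_norm_le.mp (Metric.isBounded_range_of_tendsto _ (hg x))).imp
      fun _ hC n => hC _ ⟨n, rfl⟩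

theorem pow_mul_mul_pow_add_sum_eq_of_eq {R : Type*} [Ring R] {Z W P Q : R}
    (hP : P = Z * P * W + Q) (N : ℕ) :
    Z ^ N * P * W ^ N + ∑ n ∈ Finset.range N, Z ^ n * Q * W ^ n = P := by
  induction N with
  | zero => simp
  | succ N ih =>
    calc Z ^ (N + 1) * P * W ^ (N + 1) + ∑ n ∈ Finset.range (N + 1), Z ^ n * Q * W ^ n
        = Z ^ N * (Z * P * W + Q) * W ^ N + ∑ n ∈ Finset.range N, Z ^ n * Q * W ^ n := by
          rw [Finset.sum_range_succ, pow_succ, pow_succ']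
          noncomm_ring
      _ = P := by rw [← hP, ih]

section

variable {𝕜 E F : Type*} [RCLike 𝕜]
  [NormedAddCommGroup E] [InnerProductSpace 𝕜 E] [CompleteSpace E]
  [NormedAddCommGroup F] [InnerProductSpace 𝕜 F] [CompleteSpace F]

theorem tendsto_pow_apply_apply_adjoint_pow_apply {Z : E →L[𝕜] E}
    (hZ : ∀ x, Tendsto (fun n => (adjoint Z ^ n) x) atTop (𝓝 0)) (D : E →L[𝕜] E) (x : E) :
    Tendsto (fun n => (Z ^ n) (D ((adjoint Z ^ n) x))) atTop (𝓝 0) := by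
  obtain ⟨C, hC⟩ := exists_norm_le_of_tendsto_apply hZ
  have hbound : ∀ n, ‖(Z ^ n) (D ((adjoint Z ^ n) x))‖ ≤ C * ‖D‖ * ‖(adjoint Z ^ n) x‖ := by
    intro n
    have hZn : ‖Z ^ n‖ ≤ C := by
      rw [← norm_star, star_pow, star_eq_adjoint]
      exact hC n
    calc ‖(Z ^ n) (D ((adjoint Z ^ n) x))‖ ≤ ‖Z ^ n‖ * (‖D‖ * ‖(adjoint Z ^ n) x‖) :=
          (le_opNorm _ _).trans (by gcongr; exact le_opNorm _ _)
      _ ≤ C * ‖D‖ * ‖(adjoint Z ^ n) x‖ := by rw [← mul_assoc]; gcongr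
  refine squeeze_zero_norm hbound ?_
  simpa using ((hZ x).norm).const_mul (C * ‖D‖)

theorem inner_pow_apply_adjoint_pow_apply (Z : E →L[𝕜] E) (B : F →L[𝕜] E) (n : ℕ) (x : E) :
    inner 𝕜 ((Z ^ n) (B (adjoint B ((adjoint Z ^ n) x)))) x
      = (‖adjoint B ((adjoint Z ^ n) x)‖ ^ 2 : 𝕜) := by
  rw [← adjoint_inner_right, ← star_eq_adjoint, ← star_pow, star_eq_adjoint,
    ← adjoint_inner_right, inner_self_eq_norm_sq_to_K]

theorem pow_comp_comp_adjoint_pow_add_sum_eq {Z P Q : E →L[𝕜] E}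
    (hP : P = Z ∘L (P ∘L adjoint Z) + Q) (N : ℕ) :
    Z ^ N * P * adjoint Z ^ N + ∑ n ∈ Finset.range N, Z ^ n * Q * adjoint Z ^ n = P :=
  pow_mul_mul_pow_add_sum_eq_of_eq (by rw [mul_assoc]; exact hP) N

theorem eq_of_eq_comp_comp_adjoint_add {Z P P' Q : E →L[𝕜] E}
    (hZ : ∀ x, Tendsto (fun n => (adjoint Z ^ n) x) atTop (𝓝 0))
    (hP : P = Z ∘L (P ∘L adjoint Z) + Q) (hP' : P' = Z ∘L (P' ∘L adjoint Z) + Q) : P' = P := by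
  have hD : P' - P = Z ∘L ((P' - P) ∘L adjoint Z) + 0 := by
    conv_lhs => rw [hP', hP]
    simp [comp_sub, sub_comp]
  rw [← sub_eq_zero]
  ext x
  have hfix : ∀ n, (Z ^ n) ((P' - P) ((adjoint Z ^ n) x)) = (P' - P) x := fun n => by
    simpa using congrArg (· x) (pow_comp_comp_adjoint_pow_add_sum_eq hD n)
  exact tendsto_nhds_unique (by simpa only [hfix] using tendsto_const_nhds)
    (tendsto_pow_apply_apply_adjoint_pow_apply hZ (P' - P) x)

theorem tendsto_sum_pow_apply_apply_adjoint_pow_apply {Z P Q : E →L[𝕜] E}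
    (hZ : ∀ x, Tendsto (fun n => (adjoint Z ^ n) x) atTop (𝓝 0))
    (hP : P = Z ∘L (P ∘L adjoint Z) + Q) (x : E) :
    Tendsto (fun N => ∑ n ∈ Finset.range N, (Z ^ n) (Q ((adjoint Z ^ n) x))) atTop (𝓝 (P x)) := by
  have hsum : ∀ N, ∑ n ∈ Finset.range N, (Z ^ n) (Q ((adjoint Z ^ n) x))
      = P x - (Z ^ N) (P ((adjoint Z ^ N) x)) := fun N => by
    rw [eq_sub_iff_add_eq', ← congrArg (· x) (pow_comp_comp_adjoint_pow_add_sum_eq hP N)]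
    simp
  simp only [hsum]
  simpa using tendsto_const_nhds.sub (tendsto_pow_apply_apply_adjoint_pow_apply hZ P x)

theorem hasSum_norm_sq_adjoint_apply_of_tendsto {Z : E →L[𝕜] E} {B : F →L[𝕜] E} {x y : E}
    (h : Tendsto (fun N => ∑ n ∈ Finset.range N, (Z ^ n) (B (adjoint B ((adjoint Z ^ n) x))))
      atTop (𝓝 y)) :
    HasSum (fun n => ‖adjoint B ((adjoint Z ^ n) x)‖ ^ 2) (RCLike.re (inner 𝕜 y x)) := by
  refine (hasSum_iff_tendsto_nat_of_nonneg (fun n => sq_nonneg _) _).mpr ?_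
  have := (RCLike.continuous_re.tendsto _).comp (h.inner (𝕜 := 𝕜) (tendsto_const_nhds (x := x)))
  simpa only [Function.comp_def, sum_inner, inner_pow_apply_adjoint_pow_apply, map_sum,
    ← RCLike.ofReal_pow, RCLike.ofReal_re] using this

end

noncomputable section

variable {𝒵 𝒴 : Type*}
  [NormedAddCommGroup 𝒵] [InnerProductSpace ℂ 𝒵] [CompleteSpace 𝒵]
  [NormedAddCommGroup 𝒴] [InnerProductSpace ℂ 𝒴] [CompleteSpace 𝒴]

theorem stein_equation_controllability_solution
    (Z : 𝒵 →L[ℂ] 𝒵) (B : 𝒴 →L[ℂ] 𝒵)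
    -- Z* is pointwise stable
    (hZ : ∀ h : 𝒵, Tendsto (fun n : ℕ => ((adjoint Z) ^ n) h) atTop (𝓝 0))
    (P : 𝒵 →L[ℂ] 𝒵)
    (hP : P = Z.comp (P.comp (adjoint Z)) + B.comp (adjoint B)) :
    -- uniqueness
    (∀ P' : 𝒵 →L[ℂ] 𝒵,
      P' = Z.comp (P'.comp (adjoint Z)) + B.comp (adjoint B) → P' = P) ∧
    -- the series Σₙ Zⁿ B B* (Z*)ⁿ z converges in norm to P z
    (∀ z : 𝒵,
      Tendsto (fun N : ℕ =>
          ∑ n ∈ Finset.range N, (Z ^ n) (B ((adjoint B) (((adjoint Z) ^ n) z))))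
        atTop (𝓝 (P z))) ∧
    -- ⟨P z, z⟩ = Σₙ ‖B*(Z*)ⁿ z‖²
    (∀ z : 𝒵,
      HasSum (fun n : ℕ => (‖(adjoint B) (((adjoint Z) ^ n) z)‖ ^ 2 : ℝ))
        (RCLike.re (inner ℂ (P z) z : ℂ))) := by
  have hseries := tendsto_sum_pow_apply_apply_adjoint_pow_apply hZ hP
  exact ⟨fun P' hP' => eq_of_eq_comp_comp_adjoint_add hZ hP hP', hseries,
    fun z => hasSum_norm_sq_adjoint_apply_of_tendsto (hseries z)⟩

end
end

section
/- Let 𝒵 and 𝒴 be complex Hilbert spaces and let γ : 𝒵 → 𝒴 and α : 𝒵 → 𝒵 be bounded operators such that the column operator [γ; α] : 𝒵 → 𝒴 ⊕ 𝒵 is a contraction, i.e. ‖γz‖² + ‖αz‖² ≤ ‖z‖² for all z ∈ 𝒵. Then for every z ∈ 𝒵 the series Σ_{n≥0} ‖γ αⁿ z‖² converges and Σ_{n≥0} ‖γ αⁿ z‖² ≤ ‖z‖²; that is, the observability operator Γ z = (γz, γαz, γα²z, …) is a well-defined contraction from 𝒵 into ℓ²₊(𝒴). -/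
/- Statement 18: If the column operator [γ; α] : 𝒵 → 𝒴 ⊕ 𝒵 is a contraction, i.e.
‖γz‖² + ‖αz‖² ≤ ‖z‖² for all z, then for every z the series Σₙ ‖γαⁿz‖² converges and
is bounded by ‖z‖²; that is, the observability operator Γz = (γz, γαz, γα²z, …) is a
well-defined contraction from 𝒵 into ℓ²₊(𝒴). -/

noncomputable section

variable {𝒵 𝒴 : Type*}
  [NormedAddCommGroup 𝒵] [InnerProductSpace ℂ 𝒵] [CompleteSpace 𝒵]
  [NormedAddCommGroup 𝒴] [InnerProductSpace ℂ 𝒴] [CompleteSpace 𝒴]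

theorem observability_operator_contraction
    (γ : 𝒵 →L[ℂ] 𝒴) (α : 𝒵 →L[ℂ] 𝒵)
    (h : ∀ z : 𝒵, ‖γ z‖ ^ 2 + ‖α z‖ ^ 2 ≤ ‖z‖ ^ 2) :
    ∀ z : 𝒵,
      Summable (fun n : ℕ => ‖γ ((α ^ n) z)‖ ^ 2) ∧
      ∑' n : ℕ, ‖γ ((α ^ n) z)‖ ^ 2 ≤ ‖z‖ ^ 2 := by
  intro z
  have key : ∀ N : ℕ, (∑ n ∈ Finset.range N, ‖γ ((α ^ n) z)‖ ^ 2) + ‖(α ^ N) z‖ ^ 2 ≤ ‖z‖ ^ 2 := by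
    intro N
    induction N with
    | zero => simp
    | succ N ih =>
      rw [Finset.sum_range_succ]
      have h2 := h ((α ^ N) z)
      have : (α ^ (N + 1)) z = α ((α ^ N) z) := by
        rw [pow_succ']
        simp
      rw [this]
      linarith
  have bound : ∀ N : ℕ, (∑ n ∈ Finset.range N, ‖γ ((α ^ n) z)‖ ^ 2) ≤ ‖z‖ ^ 2 := fun N =>
    le_trans (le_add_of_nonneg_right (by positivity)) (key N)
  have hs : Summable (fun n : ℕ => ‖γ ((α ^ n) z)‖ ^ 2) :=
    summable_of_sum_range_le (fun n => by positivity) bound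
  exact ⟨hs, Summable.tsum_le_of_sum_range_le hs bound⟩

end
end
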